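/- Let B be a block configuration in 𝔽₂^d and let φ : 𝔽₂^d → 𝔽₂^{d̄} and ψ : 𝔽₂^{d̄} → 𝔽₂^{d′} be linear maps, with Φ the φ-induced map on TP[B]. Then (i) RP[B][ψ∘φ] = { x ∈ TP[B] : Φ(x) ∈ RP[φ(B)][ψ] }; (ii) RP[B][φ] ⊆ RP[B][ψ∘φ]; and (iii) if ψ is injective on the 𝔽₂-linear span of φ(B(1)) ∪ … ∪ φ(B(n)), then RP[B][φ] = RP[B][ψ∘φ]. -/

import Mathlib

/-!
Linearity of the induced maps carries the whole argument. `Φ_φ` is the restriction of a linear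
map sending the incidence vector of a transversal `ξ` to that of `φ ∘ ξ`, and
`Φ_ψ ∘ Φ_φ = Φ_{ψ ∘ φ}`; hence `Φ_φ` maps `CTP[B]` into `CTP[φ(B)]`, which gives (i) and (ii).
If `ψ` is injective on the span of the blocks of `C`, every cyclic transversal of `ψ(C)` lifts
to one of `C` (its sum lies in the span and is sent to `0`), so `Φ_ψ` maps `CTP[C]` onto
`CTP[ψ(C)]`; and `Φ_ψ` is injective on `TP[C]`, since it merely relabels coordinates. Together
these give the reverse inclusion in (iii).
-/

open scoped Classical

/-- The field `𝔽₂^d`, represented as functions `Fin d → ZMod 2`. -/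
abbrev F2 (d : ℕ) : Type := Fin d → ZMod 2

/-- A cyclic transversal of a block configuration `B`. -/
def IsCyclicTransversal {d n : ℕ} (B : Fin n → Set (F2 d)) (ξ : Fin n → F2 d) : Prop :=
  (∀ i, ξ i ∈ B i) ∧ (∑ i, ξ i) = 0

/-- The incidence vector of a transversal. -/
noncomputable def incVec {d n : ℕ} (ξ : Fin n → F2 d) : Fin n → F2 d → ℝ :=
  fun i ω => if ξ i = ω then 1 else 0

/-- The cyclic transversal polytope of a block configuration. -/
noncomputable def CTP {d n : ℕ} (B : Fin n → Set (F2 d)) : Set (Fin n → F2 d → ℝ) :=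
  convexHull ℝ (incVec '' { ξ | IsCyclicTransversal B ξ })

/-- The transversal polytope of a block configuration. -/
def TP {d n : ℕ} (B : Fin n → Set (F2 d)) : Set (Fin n → F2 d → ℝ) :=
  { x | (∀ i ω, 0 ≤ x i ω) ∧ (∀ i ω, ω ∉ B i → x i ω = 0) ∧ ∀ i, (∑ ω : F2 d, x i ω) = 1 }

/-- The size of a block configuration. -/
noncomputable def blockSize {d n : ℕ} (B : Fin n → Set (F2 d)) : ℕ := ∑ i, (B i).ncard

/-- The rank of a block configuration. -/
noncomputable def blockRank {d n : ℕ} (B : Fin n → Set (F2 d)) : ℕ :=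
  Module.finrank (ZMod 2) (Submodule.span (ZMod 2) (⋃ i, B i))

/-- Two sets of real vectors are affinely isomorphic. -/
def AffIso {α β : Type*} [AddCommGroup α] [Module ℝ α] [AddCommGroup β] [Module ℝ β]
    (P : Set α) (Q : Set β) : Prop :=
  ∃ f : α →ᵃ[ℝ] β, Set.InjOn f P ∧ f '' P = Q

/-- The left-hand side of the lifted odd-set (LOS) inequality associated with `η` and `I`. -/
noncomputable def losLHS {d n : ℕ} (B : Fin n → Set (F2 d)) (η : F2 d) (I : Finset (Fin n))
    (x : Fin n → F2 d → ℝ) : ℝ :=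
  (∑ i ∈ I, ∑ ω ∈ Finset.univ.filter (fun ω : F2 d => ω ∈ B i ∧ (∑ j, η j * ω j) = 0), x i ω) +
  (∑ i ∈ Iᶜ, ∑ ω ∈ Finset.univ.filter (fun ω : F2 d => ω ∈ B i ∧ (∑ j, η j * ω j) = 1), x i ω)

/-- The `φ`-induced map `Φ` (w.r.t. the block configuration `B`):
`Φ(x)^i_{ω'} = Σ_{ω ∈ B(i), φ(ω) = ω'} x^i_ω`. -/
noncomputable def indMap {d d' n : ℕ} (B : Fin n → Set (F2 d)) (φ : F2 d →ₗ[ZMod 2] F2 d')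
    (x : Fin n → F2 d → ℝ) : Fin n → F2 d' → ℝ :=
  fun i ω' => ∑ ω ∈ Finset.univ.filter (fun ω : F2 d => ω ∈ B i ∧ φ ω = ω'), x i ω

/-- The `φ`-relaxation `RP[B][φ]` of `CTP[B]`. -/
noncomputable def RP {d d' n : ℕ} (B : Fin n → Set (F2 d)) (φ : F2 d →ₗ[ZMod 2] F2 d') :
    Set (Fin n → F2 d → ℝ) :=
  { x ∈ TP B | indMap B φ x ∈ CTP (fun i => φ '' B i) }

/-- The rank-`r` relaxation `RP[B][r]` of `CTP[B]`: the intersection of the `φ`-relaxations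
over all linear maps `φ` with domain `𝔽₂^d` whose image has dimension at most `r`. -/
noncomputable def RPr {d n : ℕ} (B : Fin n → Set (F2 d)) (r : ℕ) :
    Set (Fin n → F2 d → ℝ) :=
  ⋂ (d' : ℕ), ⋂ (φ : F2 d →ₗ[ZMod 2] F2 d'),
    ⋂ (_ : Module.finrank (ZMod 2) (LinearMap.range φ) ≤ r), RP B φ

section

variable {d d₁ d₂ n : ℕ}

lemma indMap_apply (B : Fin n → Set (F2 d)) (φ : F2 d →ₗ[ZMod 2] F2 d₁)
    (x : Fin n → F2 d → ℝ) (i : Fin n) (ω' : F2 d₁) :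
    indMap B φ x i ω' = ∑ ω ∈ {ω | ω ∈ B i} with φ ω = ω', x i ω := by
  rw [indMap, Finset.filter_filter]

noncomputable def indMapLinear (B : Fin n → Set (F2 d)) (φ : F2 d →ₗ[ZMod 2] F2 d₁) :
    (Fin n → F2 d → ℝ) →ₗ[ℝ] (Fin n → F2 d₁ → ℝ) where
  toFun := indMap B φ
  map_add' x y := by funext i ω'; simp [indMap, Finset.sum_add_distrib]
  map_smul' c x := by funext i ω'; simp [indMap, Finset.mul_sum]

@[simp]
lemma coe_indMapLinear (B : Fin n → Set (F2 d)) (φ : F2 d →ₗ[ZMod 2] F2 d₁) :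
    ⇑(indMapLinear B φ) = indMap B φ := rfl

lemma convex_TP (B : Fin n → Set (F2 d)) : Convex ℝ (TP B) := by
  rintro x ⟨hx0, hxB, hx1⟩ y ⟨hy0, hyB, hy1⟩ a b ha hb hab
  refine ⟨fun i ω => ?_, fun i ω hω => by simp [hxB i ω hω, hyB i ω hω], fun i => ?_⟩
  · simp only [Pi.add_apply, Pi.smul_apply, smul_eq_mul]
    exact add_nonneg (mul_nonneg ha (hx0 i ω)) (mul_nonneg hb (hy0 i ω))
  · simp only [Pi.add_apply, Pi.smul_apply, smul_eq_mul, Finset.sum_add_distrib,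
      ← Finset.mul_sum, hx1 i, hy1 i, mul_one, hab]

lemma incVec_mem_TP {B : Fin n → Set (F2 d)} {ξ : Fin n → F2 d} (hξ : ∀ i, ξ i ∈ B i) :
    incVec ξ ∈ TP B := by
  refine ⟨fun i ω => ?_, fun i ω hω => ?_, fun i => by simp [incVec]⟩
  · unfold incVec; split_ifs <;> norm_num
  · rw [incVec, if_neg]
    rintro rfl
    exact hω (hξ i)

lemma CTP_subset_TP (B : Fin n → Set (F2 d)) : CTP B ⊆ TP B :=
  convexHull_min (by rintro _ ⟨ξ, hξ, rfl⟩; exact incVec_mem_TP hξ.1) (convex_TP B)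

lemma indMap_incVec {B : Fin n → Set (F2 d)} (φ : F2 d →ₗ[ZMod 2] F2 d₁) {ξ : Fin n → F2 d}
    (hξ : ∀ i, ξ i ∈ B i) : indMap B φ (incVec ξ) = incVec (fun i => φ (ξ i)) := by
  funext i ω'
  simp [indMap, incVec, Finset.sum_ite_eq, hξ i]

lemma indMap_mem_TP {B : Fin n → Set (F2 d)} (φ : F2 d →ₗ[ZMod 2] F2 d₁)
    {x : Fin n → F2 d → ℝ} (hx : x ∈ TP B) : indMap B φ x ∈ TP (fun i => φ '' B i) := by
  obtain ⟨hx0, hxB, hx1⟩ := hx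
  refine ⟨fun i ω' => Finset.sum_nonneg fun ω _ => hx0 i ω, fun i ω' hω' => ?_, fun i => ?_⟩
  · refine Finset.sum_eq_zero fun ω hω => absurd ?_ hω'
    obtain ⟨-, hωB, rfl⟩ := Finset.mem_filter.1 hω
    exact Set.mem_image_of_mem φ hωB
  · simp_rw [indMap_apply, Finset.sum_fiberwise, ← hx1 i]
    exact Finset.sum_filter_of_ne fun ω _ h => by_contra fun hω => h (hxB i ω hω)

lemma indMap_indMap (B : Fin n → Set (F2 d)) (φ : F2 d →ₗ[ZMod 2] F2 d₁)
    (ψ : F2 d₁ →ₗ[ZMod 2] F2 d₂) (x : Fin n → F2 d → ℝ) :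
    indMap (fun i => φ '' B i) ψ (indMap B φ x) = indMap B (ψ.comp φ) x := by
  funext i ω''
  rw [indMap_apply B (ψ.comp φ), indMap, ← Finset.sum_fiberwise_of_maps_to (g := φ)
    (t := {ω' | ω' ∈ φ '' B i ∧ ψ ω' = ω''})]
  · refine Finset.sum_congr rfl fun ω' hω' => Finset.sum_congr ?_ fun _ _ => rfl
    rw [(Finset.mem_filter.1 hω').2.2.symm]
    ext ω
    simp only [Finset.mem_filter, Finset.mem_univ, true_and, LinearMap.coe_comp,
      Function.comp_apply]
    constructor
    · rintro ⟨hω, rfl⟩; exact ⟨⟨hω, rfl⟩, rfl⟩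
    · rintro ⟨⟨hω, -⟩, rfl⟩; exact ⟨hω, rfl⟩
  · intro ω hω
    simp only [Finset.mem_filter, Finset.mem_univ, true_and] at hω ⊢
    exact ⟨Set.mem_image_of_mem φ hω.1, hω.2⟩


lemma isCyclicTransversal_map {B : Fin n → Set (F2 d)} (φ : F2 d →ₗ[ZMod 2] F2 d₁)
    {ξ : Fin n → F2 d} (hξ : IsCyclicTransversal B ξ) :
    IsCyclicTransversal (fun i => φ '' B i) (fun i => φ (ξ i)) :=
  ⟨fun i => Set.mem_image_of_mem φ (hξ.1 i), by rw [← map_sum, hξ.2, map_zero]⟩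

lemma exists_isCyclicTransversal_of_map {B : Fin n → Set (F2 d)} {φ : F2 d →ₗ[ZMod 2] F2 d₁}
    (hφ : Set.InjOn φ (Submodule.span (ZMod 2) (⋃ i, B i)))
    {ζ : Fin n → F2 d₁} (hζ : IsCyclicTransversal (fun i => φ '' B i) ζ) :
    ∃ ξ, IsCyclicTransversal B ξ ∧ (fun i => φ (ξ i)) = ζ := by
  choose ξ hξB hξζ using hζ.1
  have hsum : ∑ i, ξ i ∈ Submodule.span (ZMod 2) (⋃ i, B i) :=
    Submodule.sum_mem _ fun i _ => Submodule.subset_span (Set.mem_iUnion_of_mem i (hξB i))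
  refine ⟨ξ, ⟨hξB, hφ hsum (zero_mem _) ?_⟩, funext hξζ⟩
  rw [map_sum, map_zero]
  simpa only [hξζ] using hζ.2

lemma image_indMap_CTP (B : Fin n → Set (F2 d)) (φ : F2 d →ₗ[ZMod 2] F2 d₁) :
    indMap B φ '' CTP B =
      convexHull ℝ (incVec '' ((fun ξ i => φ (ξ i)) '' {ξ | IsCyclicTransversal B ξ})) := by
  rw [CTP, ← coe_indMapLinear, LinearMap.image_convexHull, Set.image_image, Set.image_image]
  exact congrArg _ (Set.image_congr fun ξ hξ => indMap_incVec φ hξ.1)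

lemma image_indMap_CTP_subset (B : Fin n → Set (F2 d)) (φ : F2 d →ₗ[ZMod 2] F2 d₁) :
    indMap B φ '' CTP B ⊆ CTP (fun i => φ '' B i) := by
  rw [image_indMap_CTP]
  refine convexHull_mono (Set.image_mono ?_)
  rintro _ ⟨ξ, hξ, rfl⟩
  exact isCyclicTransversal_map φ hξ

lemma image_indMap_CTP_of_injOn {B : Fin n → Set (F2 d)} {φ : F2 d →ₗ[ZMod 2] F2 d₁}
    (hφ : Set.InjOn φ (Submodule.span (ZMod 2) (⋃ i, B i))) :
    indMap B φ '' CTP B = CTP (fun i => φ '' B i) := by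
  refine (image_indMap_CTP_subset B φ).antisymm ?_
  rw [image_indMap_CTP]
  refine convexHull_mono (Set.image_mono fun ζ hζ => ?_)
  obtain ⟨ξ, hξ, rfl⟩ := exists_isCyclicTransversal_of_map hφ hζ
  exact ⟨ξ, hξ, rfl⟩

lemma indMap_apply_map_of_injOn {B : Fin n → Set (F2 d)} {φ : F2 d →ₗ[ZMod 2] F2 d₁}
    {i : Fin n} (hφ : Set.InjOn φ (B i)) (x : Fin n → F2 d → ℝ) {ω : F2 d} (hω : ω ∈ B i) :
    indMap B φ x i (φ ω) = x i ω := by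
  have hfiber : ({τ | τ ∈ B i ∧ φ τ = φ ω} : Finset (F2 d)) = {ω} := by
    ext τ
    simp only [Finset.mem_filter, Finset.mem_univ, true_and, Finset.mem_singleton]
    exact ⟨fun ⟨hτ, h⟩ => hφ hτ hω h, by rintro rfl; exact ⟨hω, rfl⟩⟩
  rw [indMap, hfiber, Finset.sum_singleton]

lemma injOn_indMap_TP {B : Fin n → Set (F2 d)} {φ : F2 d →ₗ[ZMod 2] F2 d₁}
    (hφ : ∀ i, Set.InjOn φ (B i)) : Set.InjOn (indMap B φ) (TP B) := by
  intro x hx y hy hxy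
  funext i ω
  by_cases hω : ω ∈ B i
  · rw [← indMap_apply_map_of_injOn (hφ i) x hω, hxy, indMap_apply_map_of_injOn (hφ i) y hω]
  · rw [hx.2.1 i ω hω, hy.2.1 i ω hω]

lemma mem_CTP_of_indMap_mem_CTP {B : Fin n → Set (F2 d)} {φ : F2 d →ₗ[ZMod 2] F2 d₁}
    (hφ : Set.InjOn φ (Submodule.span (ZMod 2) (⋃ i, B i))) {x : Fin n → F2 d → ℝ}
    (hx : x ∈ TP B) (h : indMap B φ x ∈ CTP (fun i => φ '' B i)) : x ∈ CTP B := by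
  rw [← image_indMap_CTP_of_injOn hφ] at h
  obtain ⟨y, hy, hyx⟩ := h
  have hφB : ∀ i, Set.InjOn φ (B i) := fun i =>
    hφ.mono ((Set.subset_iUnion B i).trans Submodule.subset_span)
  rwa [← injOn_indMap_TP hφB (CTP_subset_TP B hy) hx hyx]

lemma image_comp_blocks (B : Fin n → Set (F2 d)) (φ : F2 d →ₗ[ZMod 2] F2 d₁)
    (ψ : F2 d₁ →ₗ[ZMod 2] F2 d₂) :
    (fun i => ψ.comp φ '' B i) = fun i => ψ '' (φ '' B i) :=
  funext fun i => Set.image_comp ψ φ (B i)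

lemma RP_comp (B : Fin n → Set (F2 d)) (φ : F2 d →ₗ[ZMod 2] F2 d₁)
    (ψ : F2 d₁ →ₗ[ZMod 2] F2 d₂) :
    RP B (ψ.comp φ) = {x ∈ TP B | indMap B φ x ∈ RP (fun i => φ '' B i) ψ} := by
  ext x
  simp only [RP, Set.mem_sep_iff, ← indMap_indMap, image_comp_blocks]
  exact ⟨fun ⟨hx, h⟩ => ⟨hx, indMap_mem_TP φ hx, h⟩, fun ⟨hx, _, h⟩ => ⟨hx, h⟩⟩

lemma RP_subset_RP_comp (B : Fin n → Set (F2 d)) (φ : F2 d →ₗ[ZMod 2] F2 d₁)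
    (ψ : F2 d₁ →ₗ[ZMod 2] F2 d₂) : RP B φ ⊆ RP B (ψ.comp φ) := by
  rintro x ⟨hx, h⟩
  rw [RP_comp]
  exact ⟨hx, indMap_mem_TP φ hx, image_indMap_CTP_subset _ ψ ⟨_, h, rfl⟩⟩

lemma RP_comp_subset_RP (B : Fin n → Set (F2 d)) (φ : F2 d →ₗ[ZMod 2] F2 d₁)
    {ψ : F2 d₁ →ₗ[ZMod 2] F2 d₂}
    (hψ : Set.InjOn ψ (Submodule.span (ZMod 2) (⋃ i, φ '' B i))) :
    RP B (ψ.comp φ) ⊆ RP B φ := by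
  rw [RP_comp]
  rintro x ⟨hx, hφx, h⟩
  exact ⟨hx, mem_CTP_of_indMap_mem_CTP hψ hφx h⟩

end

theorem statement16_general (d d₁ d₂ n : ℕ) (B : Fin n → Set (F2 d))
    (φ : F2 d →ₗ[ZMod 2] F2 d₁) (ψ : F2 d₁ →ₗ[ZMod 2] F2 d₂) :
    RP B (ψ.comp φ) = { x ∈ TP B | indMap B φ x ∈ RP (fun i => φ '' B i) ψ } ∧
    RP B φ ⊆ RP B (ψ.comp φ) ∧
    (Set.InjOn ψ (Submodule.span (ZMod 2) (⋃ i, φ '' B i) : Set (F2 d₁)) →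
      RP B φ = RP B (ψ.comp φ)) :=
  ⟨RP_comp B φ ψ, RP_subset_RP_comp B φ ψ,
    fun hψ => (RP_subset_RP_comp B φ ψ).antisymm (RP_comp_subset_RP B φ hψ)⟩

/-- behaviour of `φ`-relaxations under composition of linear maps. -/
theorem statement16 (d d₁ d₂ n : ℕ) (hn : 2 ≤ n) (B : Fin n → Set (F2 d))
    (hB : ∀ i, (B i).Nonempty)
    (φ : F2 d →ₗ[ZMod 2] F2 d₁) (ψ : F2 d₁ →ₗ[ZMod 2] F2 d₂) :
    RP B (ψ.comp φ) = { x ∈ TP B | indMap B φ x ∈ RP (fun i => φ '' B i) ψ } ∧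
    RP B φ ⊆ RP B (ψ.comp φ) ∧
    (Set.InjOn ψ (Submodule.span (ZMod 2) (⋃ i, φ '' B i) : Set (F2 d₁)) →
      RP B φ = RP B (ψ.comp φ)) :=
  statement16_general d d₁ d₂ n B φ ψ
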